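/- arXiv:2107.04349 — 6 statements merged into one kernel-verified Lean document; each statement's English description precedes it below -/
import Mathlib

section
/- Let k ∈ {1,…,n−1} and suppose o ∈ ℝⁿ minimizes ‖Ax − b‖² over all x ∈ ℝⁿ with card(x) ≤ k. Assume õ_k > √g_k and that the residual ε = Ao − b satisfies ‖A‖·‖ε‖ ≤ min{√g_{k+1}, õ_k}. Then o is a stationary point of the relaxation R_g(·) + ‖A·−b‖², i.e. 2z is a subgradient of f** at o, where z = (I − AᵀA)o + Aᵀb. -/
/-!
Write `S` for the support of `o` and `ε = Ao - b`. Optimality of `o` over vectors supported in `S`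
makes `Aᵀε` vanish on `S`, so `z = o - Aᵀε` agrees with `o` on `S`, where `|z_i| ≥ õ_k`, while off
`S` we have `|z_i| ≤ ‖A‖‖ε‖`. Since `⟪u, 2z⟫ - ‖u‖² = ‖z‖² - ‖u - z‖²`, the vector `2z` is a
subgradient of `f` (hence of `f**`) at `o` as soon as `o` minimizes `G(card u) + ‖u - z‖²`. For a
support `T` the best `u` equals `z` on `T`, and an exchange argument compares `T` with `S`
(`g` being nondecreasing): dropping an index of `S` raises `‖u - z‖²` by at least `õ_k² ≥ g_k`,
more than `G` decreases, and adding an index outside `S` lowers it by at most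
`‖A‖²‖ε‖² ≤ g_{k+1}`, less than `G` increases.
-/

open scoped RealInnerProductSpace ENNReal
noncomputable section

/-- `ℝⁿ` with the Euclidean inner product and norm. -/
abbrev Evec (n : ℕ) := EuclideanSpace ℝ (Fin n)

/-- The number of nonzero entries of a vector. -/
def spcard {n : ℕ} (x : Evec n) : ℕ := (Finset.univ.filter (fun i => x i ≠ 0)).card

/-- The absolute values of the entries of `x` sorted in nonincreasing order,
as a `1`-based function on `ℕ` (with value `0` outside `{1,…,n}`, so the
convention `x̃_{n+1} = 0` is built in). -/
def sortedAbs {n : ℕ} (x : Evec n) : ℕ → ℝ :=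
  fun j => if h : 1 ≤ j ∧ j ≤ n then
    |x ((Tuple.sort (fun i : Fin n => -|x i|)) ⟨j - 1, by omega⟩)| else 0

/-- `G(k) = ∑_{i=1}^k g_i`. -/
def Gsum (g : ℕ → ℝ≥0∞) (k : ℕ) : ℝ≥0∞ := ∑ i ∈ Finset.Icc 1 k, g i

/-- `f(x) = G(card x) + ‖x‖²`, valued in `EReal`. -/
def fobj {n : ℕ} (g : ℕ → ℝ≥0∞) (x : Evec n) : EReal :=
  ((Gsum g (spcard x) : ℝ≥0∞) : EReal) + ((‖x‖ ^ 2 : ℝ) : EReal)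

/-- The convex conjugate `f*` of `f`. -/
def fconj {n : ℕ} (g : ℕ → ℝ≥0∞) (y : Evec n) : EReal :=
  ⨆ x : Evec n, ((⟪x, y⟫ : ℝ) : EReal) - fobj g x

/-- The biconjugate (convex envelope) `f**` of `f`. -/
def fbiconj {n : ℕ} (g : ℕ → ℝ≥0∞) (x : Evec n) : EReal :=
  ⨆ y : Evec n, ((⟪x, y⟫ : ℝ) : EReal) - fconj g y

/-- `v` is a subgradient of `f**` at `x`. -/
def IsSubgrad {n : ℕ} (g : ℕ → ℝ≥0∞) (v x : Evec n) : Prop :=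
  ∀ w : Evec n, fbiconj g x + ((⟪v, w - x⟫ : ℝ) : EReal) ≤ fbiconj g w

/-- `z = (I − AᵀA)x + Aᵀb`. -/
def zvec {n m : ℕ} (A : Evec n →L[ℝ] Evec m) (b : Evec m) (x : Evec n) : Evec n :=
  x - ContinuousLinearMap.adjoint A (A x) + ContinuousLinearMap.adjoint A b

/-- `x` is a stationary point of the relaxation `R_g(·) + ‖A·−b‖²`:
`2z` is a subgradient of `f**` at `x`, where `z = (I − AᵀA)x + Aᵀb`. -/
def IsStationaryPt {n m : ℕ} (g : ℕ → ℝ≥0∞) (A : Evec n →L[ℝ] Evec m) (b : Evec m)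
    (x : Evec n) : Prop :=
  IsSubgrad g ((2 : ℝ) • zvec A b x) x

/-- `A` satisfies the RIP of order `r` with constant `δ`. -/
def RIP {n m : ℕ} (A : Evec n →L[ℝ] Evec m) (r : ℕ) (δ : ℝ) : Prop :=
  ∀ w : Evec n, spcard w ≤ r →
    (1 - δ) * ‖w‖ ^ 2 ≤ ‖A w‖ ^ 2 ∧ ‖A w‖ ^ 2 ≤ (1 + δ) * ‖w‖ ^ 2

/-- Square root on `[0,∞]`, with `√(+∞) = +∞`. -/
def sqrtE (a : ℝ≥0∞) : ℝ≥0∞ := a ^ (1 / 2 : ℝ)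

/-- The relaxed objective `R_g(x) + ‖Ax − b‖²`, where `R_g(x) = f**(x) − ‖x‖²`. -/
def relaxObj {n m : ℕ} (g : ℕ → ℝ≥0∞) (A : Evec n →L[ℝ] Evec m) (b : Evec m)
    (x : Evec n) : EReal :=
  (fbiconj g x - ((‖x‖ ^ 2 : ℝ) : EReal)) + ((‖A x - b‖ ^ 2 : ℝ) : EReal)

/-- The original (unrelaxed) objective `G(card(x)) + ‖Ax − b‖²`. -/
def origObj {n m : ℕ} (g : ℕ → ℝ≥0∞) (A : Evec n →L[ℝ] Evec m) (b : Evec m)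
    (x : Evec n) : EReal :=
  ((Gsum g (spcard x) : ℝ≥0∞) : EReal) + ((‖A x - b‖ ^ 2 : ℝ) : EReal)

/-- `x` is a local minimizer of `F`. -/
def IsLocalMinimizer {n : ℕ} (F : Evec n → EReal) (x : Evec n) : Prop :=
  ∃ U ∈ nhds x, ∀ w ∈ U, F x ≤ F w

open Finset

def spsupp {n : ℕ} (x : Evec n) : Finset (Fin n) := univ.filter (fun i => x i ≠ 0)

@[simp]
lemma mem_spsupp {n : ℕ} {x : Evec n} {i : Fin n} : i ∈ spsupp x ↔ x i ≠ 0 := by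
  simp [spsupp]

section SortedAbs

variable {n : ℕ} (x : Evec n)

lemma antitone_abs_comp_sort : Antitone fun p => |x (Tuple.sort (fun i => -|x i|) p)| :=
  fun _ _ hpq => neg_le_neg_iff.mp (Tuple.monotone_sort (fun i => -|x i|) hpq)

/-- All entries before a nonzero one in the sorted order are nonzero as well. -/
lemma lt_spcard_of_apply_sort_ne_zero {p : Fin n} (hp : x (Tuple.sort (fun i => -|x i|) p) ≠ 0) :
    (p : ℕ) < spcard x := by
  set σ := Tuple.sort (fun i => -|x i|)
  have hmaps : Set.MapsTo σ (Iic p) (spsupp x) := by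
    intro q hq
    have hle := antitone_abs_comp_sort x (mem_Iic.mp hq)
    simp only [mem_coe, mem_spsupp, ← abs_pos] at hle ⊢
    exact (abs_pos.mpr hp).trans_le hle
  have := card_le_card_of_injOn σ hmaps σ.injective.injOn
  rw [Fin.card_Iic] at this
  exact this

lemma le_spcard_of_sortedAbs_pos {k : ℕ} (h : 0 < sortedAbs x k) : k ≤ spcard x := by
  unfold sortedAbs at h
  split_ifs at h with hk
  · have := lt_spcard_of_apply_sort_ne_zero x (abs_pos.mp h)
    simp only at this
    omega
  · exact absurd h (lt_irrefl 0)

lemma sortedAbs_le_abs {k : ℕ} (hk : spcard x ≤ k) {i : Fin n} (hi : x i ≠ 0) :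
    sortedAbs x k ≤ |x i| := by
  obtain ⟨j, rfl⟩ := (Tuple.sort fun i => -|x i|).surjective i
  have hj := lt_spcard_of_apply_sort_ne_zero x hi
  unfold sortedAbs
  split_ifs with hkn
  · exact antitone_abs_comp_sort x (Fin.le_def.mpr (by simp only; omega))
  · exact abs_nonneg _

end SortedAbs

lemma sqrtE_sq (a : ℝ≥0∞) : sqrtE a ^ 2 = a := by
  rw [sqrtE, ← ENNReal.rpow_natCast, ← ENNReal.rpow_mul]
  norm_num

lemma le_ofReal_sq_of_sqrtE_le {a : ℝ≥0∞} {r : ℝ} (hr : 0 ≤ r) (h : sqrtE a ≤ ENNReal.ofReal r) :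
    a ≤ ENNReal.ofReal (r ^ 2) := by
  rw [ENNReal.ofReal_pow hr, ← sqrtE_sq a]
  exact pow_le_pow_left₀ zero_le h 2

lemma ofReal_sq_le_of_le_sqrtE {a : ℝ≥0∞} {r : ℝ} (hr : 0 ≤ r) (h : ENNReal.ofReal r ≤ sqrtE a) :
    ENNReal.ofReal (r ^ 2) ≤ a := by
  rw [ENNReal.ofReal_pow hr, ← sqrtE_sq a]
  exact pow_le_pow_left₀ zero_le h 2

section Gsum

variable {g : ℕ → ℝ≥0∞}

lemma Gsum_add_sum_Ioc {j k : ℕ} (hjk : j ≤ k) : Gsum g j + ∑ i ∈ Ioc j k, g i = Gsum g k := by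
  have hIcc (l : ℕ) : Icc 1 l = Ioc 0 l := Icc_add_one_left_eq_Ioc 0 l
  rw [Gsum, Gsum, hIcc, hIcc]
  exact sum_Ioc_consecutive g j.zero_le hjk

lemma Gsum_le_add_mul (hg : Monotone g) {j k : ℕ} (hjk : j ≤ k) :
    Gsum g k ≤ Gsum g j + (k - j : ℕ) * g k := by
  rw [← Gsum_add_sum_Ioc hjk]
  gcongr
  rw [← nsmul_eq_mul, ← Nat.card_Ioc]
  exact sum_le_card_nsmul _ _ _ fun i hi => hg (mem_Ioc.mp hi).2

lemma Gsum_add_mul_le (hg : Monotone g) {j k : ℕ} (hkj : k ≤ j) :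
    Gsum g k + (j - k : ℕ) * g (k + 1) ≤ Gsum g j := by
  rw [← Gsum_add_sum_Ioc hkj]
  gcongr
  rw [← nsmul_eq_mul, ← Nat.card_Ioc]
  exact card_nsmul_le_sum _ _ _ fun i hi => hg (Nat.succ_le_of_lt (mem_Ioc.mp hi).1)

lemma Gsum_ne_top (hg : Monotone g) {k : ℕ} (hk : g k ≠ ⊤) : Gsum g k ≠ ⊤ :=
  ne_top_of_le_ne_top (by simp [Gsum, hk, ENNReal.mul_eq_top]) (Gsum_le_add_mul hg k.zero_le)

end Gsum

section Exchange

variable {ι : Type*} [Fintype ι] [DecidableEq ι] {z : ι → ℝ} {S T : Finset ι} {t ρ : ℝ}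

/-- Exchange argument: passing from `S` to `T` trades the entries on `S \ T` (each `≥ t`) for
those on `T \ S` (each `≤ ρ ≤ t`). -/
lemma sum_compl_add_le_sum_compl_add {a c : ℝ} (hρt : ρ ≤ t)
    (hS : ∀ i ∈ S, t ≤ z i) (hSc : ∀ i ∉ S, z i ≤ ρ)
    (hle : #T ≤ #S → a ≤ c + (#S - #T : ℝ) * t) (hge : #S ≤ #T → a + (#T - #S : ℝ) * ρ ≤ c) :
    ∑ i ∈ Sᶜ, z i + a ≤ ∑ i ∈ Tᶜ, z i + c := by
  have hdiff : ∑ i ∈ Tᶜ, z i - ∑ i ∈ Sᶜ, z i = ∑ i ∈ S \ T, z i - ∑ i ∈ T \ S, z i := by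
    rw [← sum_sdiff_sub_sum_sdiff, compl_sdiff_compl, compl_sdiff_compl]
  have hcard : (#(S \ T) : ℝ) - #(T \ S) = #S - #T := by
    have hS' := card_sdiff_add_card_inter S T
    have hT' := card_sdiff_add_card_inter T S
    rw [inter_comm] at hT'
    rw [← hS', ← hT']
    push_cast
    ring
  have hST : (#(S \ T) : ℝ) * t ≤ ∑ i ∈ S \ T, z i := by
    simpa using card_nsmul_le_sum _ _ _ fun i hi => hS i (mem_sdiff.mp hi).1
  have hTS : ∑ i ∈ T \ S, z i ≤ (#(T \ S) : ℝ) * ρ := by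
    simpa using sum_le_card_nsmul _ _ _ fun i hi => hSc i (mem_sdiff.mp hi).2
  rcases le_total #T #S with h | h
  · have hρt' := mul_le_mul_of_nonneg_left hρt (Nat.cast_nonneg (α := ℝ) #(T \ S))
    have ht : (#(S \ T) - #(T \ S) : ℝ) * t = (#S - #T) * t := by rw [hcard]
    linarith [hle h]
  · have hρt' := mul_le_mul_of_nonneg_left hρt (Nat.cast_nonneg (α := ℝ) #(S \ T))
    have hρ : (#(S \ T) - #(T \ S) : ℝ) * ρ = (#S - #T) * ρ := by rw [hcard]
    linarith [hge h]

lemma sum_compl_add_Gsum_le {g : ℕ → ℝ≥0∞} (hg : Monotone g) (hρ : 0 ≤ ρ) (hρt : ρ ≤ t)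
    (hS : ∀ i ∈ S, t ≤ z i) (hSc : ∀ i ∉ S, z i ≤ ρ)
    (hgt : g #S ≤ ENNReal.ofReal t) (hgρ : ENNReal.ofReal ρ ≤ g (#S + 1))
    (hT : Gsum g #T ≠ ⊤) :
    ∑ i ∈ Sᶜ, z i + (Gsum g #S).toReal ≤ ∑ i ∈ Tᶜ, z i + (Gsum g #T).toReal := by
  have hS_ne_top : Gsum g #S ≠ ⊤ :=
    Gsum_ne_top hg (ne_top_of_le_ne_top ENNReal.ofReal_ne_top hgt)
  have ht : 0 ≤ t := hρ.trans hρt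
  refine sum_compl_add_le_sum_compl_add hρt hS hSc (fun h => ?_) (fun h => ?_)
  · rw [← Nat.cast_sub h]
    refine ENNReal.toReal_le_of_le_ofReal (by positivity) ((Gsum_le_add_mul hg h).trans ?_)
    rw [ENNReal.ofReal_add ENNReal.toReal_nonneg (by positivity), ENNReal.ofReal_toReal hT,
      ENNReal.ofReal_mul (Nat.cast_nonneg _), ENNReal.ofReal_natCast]
    gcongr
  · rw [← Nat.cast_sub h]
    refine (ENNReal.ofReal_le_iff_le_toReal hT).mp (le_trans ?_ (Gsum_add_mul_le hg h))
    rw [ENNReal.ofReal_add ENNReal.toReal_nonneg (by positivity), ENNReal.ofReal_toReal hS_ne_top,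
      ENNReal.ofReal_mul (Nat.cast_nonneg _), ENNReal.ofReal_natCast]
    gcongr

end Exchange

section Conjugate

variable {n : ℕ} {g : ℕ → ℝ≥0∞}

lemma fobj_eq_coe {x : Evec n} (hx : Gsum g (spcard x) ≠ ⊤) :
    fobj g x = (((Gsum g (spcard x)).toReal + ‖x‖ ^ 2 : ℝ) : EReal) := by
  rw [fobj, ← EReal.coe_ennreal_toReal hx, ← EReal.coe_add]

lemma fconj_le_coe {v : Evec n} {c : ℝ}
    (h : ∀ x : Evec n, Gsum g (spcard x) ≠ ⊤ →
      ⟪x, v⟫ - ((Gsum g (spcard x)).toReal + ‖x‖ ^ 2) ≤ c) :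
    fconj g v ≤ c := by
  refine iSup_le fun x => ?_
  by_cases hx : Gsum g (spcard x) = ⊤
  · rw [fobj, hx, EReal.coe_ennreal_top, EReal.top_add_coe, sub_eq_add_neg, EReal.neg_top,
      EReal.add_bot]
    exact bot_le
  · rw [fobj_eq_coe hx, ← EReal.coe_sub]
    exact EReal.coe_le_coe_iff.mpr (h x hx)

lemma fbiconj_le_coe {x : Evec n} {r : ℝ} (hr : fobj g x = r) : fbiconj g x ≤ r := by
  refine iSup_le fun y => ?_
  have hy : ((⟪x, y⟫ - r : ℝ) : EReal) ≤ fconj g y := by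
    rw [EReal.coe_sub, ← hr]
    exact le_iSup (fun x' : Evec n => ((⟪x', y⟫ : ℝ) : EReal) - fobj g x') x
  calc ((⟪x, y⟫ : ℝ) : EReal) - fconj g y ≤ ⟪x, y⟫ - ((⟪x, y⟫ - r : ℝ) : EReal) :=
        EReal.sub_le_sub le_rfl hy
    _ = r := by rw [← EReal.coe_sub, sub_sub_cancel]

/-- A subgradient of `f` at a point where `f` is finite is a subgradient of `f**` there. -/
lemma isSubgrad_of_forall_le {v o : Evec n} {r : ℝ} (hr : fobj g o = r)
    (h : ∀ u : Evec n, Gsum g (spcard u) ≠ ⊤ →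
      r + ⟪v, u - o⟫ ≤ (Gsum g (spcard u)).toReal + ‖u‖ ^ 2) :
    IsSubgrad g v o := by
  have hconj : fconj g v ≤ ((⟪o, v⟫ - r : ℝ) : EReal) := fconj_le_coe fun u hu => by
    have := h u hu
    rw [inner_sub_right] at this
    rw [real_inner_comm v u, real_inner_comm v o]
    linarith
  intro w
  calc fbiconj g o + ((⟪v, w - o⟫ : ℝ) : EReal) ≤ r + ((⟪v, w - o⟫ : ℝ) : EReal) := by
        gcongr
        exact fbiconj_le_coe hr
    _ = ((⟪w, v⟫ : ℝ) : EReal) - ((⟪o, v⟫ - r : ℝ) : EReal) := by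
        rw [← EReal.coe_add, ← EReal.coe_sub, inner_sub_right, real_inner_comm v w,
          real_inner_comm v o]
        congr 1
        ring
    _ ≤ ((⟪w, v⟫ : ℝ) : EReal) - fconj g v := EReal.sub_le_sub le_rfl hconj
    _ ≤ fbiconj g w := le_iSup (fun y : Evec n => ((⟪w, y⟫ : ℝ) : EReal) - fconj g y) v

end Conjugate

section Prox

variable {n : ℕ}

lemma sum_sq_compl_spsupp_le_norm_sub_sq (x y : Evec n) :
    ∑ i ∈ (spsupp x)ᶜ, y i ^ 2 ≤ ‖x - y‖ ^ 2 := by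
  rw [EuclideanSpace.norm_sq_eq]
  calc ∑ i ∈ (spsupp x)ᶜ, y i ^ 2 = ∑ i ∈ (spsupp x)ᶜ, ‖(x - y) i‖ ^ 2 :=
        sum_congr rfl fun i hi => by simp_all
    _ ≤ ∑ i, ‖(x - y) i‖ ^ 2 :=
        sum_le_sum_of_subset_of_nonneg (subset_univ _) fun _ _ _ => by positivity

lemma norm_sub_sq_eq_sum_sq_compl_spsupp {x y : Evec n} (h : ∀ i ∈ spsupp x, x i = y i) :
    ‖x - y‖ ^ 2 = ∑ i ∈ (spsupp x)ᶜ, y i ^ 2 := by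
  rw [EuclideanSpace.norm_sq_eq, ← sum_add_sum_compl (spsupp x),
    sum_eq_zero fun i hi => by simp [h i hi], zero_add]
  exact sum_congr rfl fun i hi => by simp_all

/-- `2z ∈ ∂f(o)` says that `o` minimizes `G(card u) + ‖u - z‖²`, and for a fixed support the best
`u` agrees with `z` on it. -/
lemma isSubgrad_two_smul_of_forall_le {g : ℕ → ℝ≥0∞} {z o : Evec n}
    (hzo : ∀ i ∈ spsupp o, o i = z i) (ho : Gsum g (spcard o) ≠ ⊤)
    (h : ∀ u : Evec n, Gsum g (spcard u) ≠ ⊤ →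
      ∑ i ∈ (spsupp o)ᶜ, z i ^ 2 + (Gsum g (spcard o)).toReal ≤
        ∑ i ∈ (spsupp u)ᶜ, z i ^ 2 + (Gsum g (spcard u)).toReal) :
    IsSubgrad g ((2 : ℝ) • z) o := by
  refine isSubgrad_of_forall_le (fobj_eq_coe ho) fun u hu => ?_
  have hu' := sum_sq_compl_spsupp_le_norm_sub_sq u z
  have ho' := norm_sub_sq_eq_sum_sq_compl_spsupp hzo
  have := h u hu
  rw [norm_sub_sq_real] at hu' ho'
  rw [real_inner_smul_left, inner_sub_right, real_inner_comm u z, real_inner_comm o z]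
  linarith

end Prox

lemma real_inner_eq_zero_of_forall_norm_sq_le {E : Type*} [NormedAddCommGroup E]
    [InnerProductSpace ℝ E] {x w : E} (h : ∀ t : ℝ, ‖x‖ ^ 2 ≤ ‖x + t • w‖ ^ 2) : ⟪x, w⟫ = 0 := by
  have key (t : ℝ) : 0 ≤ t * (2 * ⟪x, w⟫ + t * ‖w‖ ^ 2) := by
    have := h t
    rw [norm_add_sq_real, real_inner_smul_right, norm_smul, mul_pow, Real.norm_eq_abs, sq_abs]
      at this
    linarith
  have h := key (-⟪x, w⟫ / (‖w‖ ^ 2 + 1))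
  field_simp at h
  nlinarith [sq_nonneg ⟪x, w⟫, sq_nonneg ‖w‖]

lemma spcard_add_smul_single_le {n : ℕ} {o : Evec n} {i : Fin n} (hi : o i ≠ 0) (t : ℝ) :
    spcard (o + t • EuclideanSpace.single i 1) ≤ spcard o := by
  refine card_le_card fun l hl => ?_
  rcases eq_or_ne l i with rfl | hli
  · simpa using hi
  · simpa [hli] using hl

lemma adjoint_residual_apply_eq_zero {n m : ℕ} {A : Evec n →L[ℝ] Evec m} {b : Evec m} {k : ℕ}
    {o : Evec n} (hocard : spcard o ≤ k)
    (hmin : ∀ x : Evec n, spcard x ≤ k → ‖A o - b‖ ^ 2 ≤ ‖A x - b‖ ^ 2)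
    {i : Fin n} (hi : o i ≠ 0) :
    ContinuousLinearMap.adjoint A (A o - b) i = 0 := by
  have hsingle : ContinuousLinearMap.adjoint A (A o - b) i =
      ⟪A o - b, A (EuclideanSpace.single i 1)⟫ := by
    rw [← ContinuousLinearMap.adjoint_inner_left, EuclideanSpace.inner_single_right]
    simp
  rw [hsingle]
  refine real_inner_eq_zero_of_forall_norm_sq_le fun t => ?_
  have := hmin _ ((spcard_add_smul_single_le hi t).trans hocard)
  rwa [map_add, map_smul, add_sub_right_comm] at this

lemma sq_adjoint_apply_le {n m : ℕ} (A : Evec n →L[ℝ] Evec m) (y : Evec m) (i : Fin n) :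
    ContinuousLinearMap.adjoint A y i ^ 2 ≤ (‖A‖ * ‖y‖) ^ 2 := by
  rw [← sq_abs, ← Real.norm_eq_abs, ← LinearIsometryEquiv.norm_map ContinuousLinearMap.adjoint A]
  gcongr
  exact (PiLp.norm_apply_le _ i).trans (ContinuousLinearMap.le_opNorm _ _)

theorem fixed_cardinality_solution_is_stationary_general
    {n m : ℕ} (g : ℕ → ℝ≥0∞) (hgmono : Monotone g)
    (A : Evec n →L[ℝ] Evec m) (b : Evec m)
    (k : ℕ)
    (o : Evec n) (hocard : spcard o ≤ k)
    (hmin : ∀ x : Evec n, spcard x ≤ k → ‖A o - b‖ ^ 2 ≤ ‖A x - b‖ ^ 2)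
    (hok : sqrtE (g k) < ENNReal.ofReal (sortedAbs o k))
    (hnoise : ENNReal.ofReal (‖A‖ * ‖A o - b‖) ≤
      min (sqrtE (g (k + 1))) (ENNReal.ofReal (sortedAbs o k))) :
    IsStationaryPt g A b o := by
  set t := sortedAbs o k
  set ρ := ‖A‖ * ‖A o - b‖
  have ht : 0 < t := ENNReal.ofReal_pos.mp (zero_le.trans_lt hok)
  have hρ : 0 ≤ ρ := by positivity
  have hρt : ρ ≤ t := (ENNReal.ofReal_le_ofReal_iff ht.le).mp (hnoise.trans (min_le_right _ _))
  have hgk : g k ≤ ENNReal.ofReal (t ^ 2) := le_ofReal_sq_of_sqrtE_le ht.le hok.le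
  obtain rfl : spcard o = k := le_antisymm hocard (le_spcard_of_sortedAbs_pos o ht)
  have hz : zvec A b o = o - ContinuousLinearMap.adjoint A (A o - b) := by
    rw [zvec, map_sub]
    abel
  have hzS : ∀ i ∈ spsupp o, o i = zvec A b o i := fun i hi => by
    rw [hz, PiLp.sub_apply, adjoint_residual_apply_eq_zero hocard hmin (mem_spsupp.mp hi),
      sub_zero]
  refine isSubgrad_two_smul_of_forall_le hzS
    (Gsum_ne_top hgmono (ne_top_of_le_ne_top ENNReal.ofReal_ne_top hgk)) fun u hu => ?_
  refine sum_compl_add_Gsum_le hgmono (sq_nonneg ρ) (pow_le_pow_left₀ hρ hρt 2)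
    (fun i hi => ?_) (fun i hi => ?_) hgk ?_ hu
  · rw [← hzS i hi, ← sq_abs (o i)]
    exact pow_le_pow_left₀ ht.le (sortedAbs_le_abs o hocard (mem_spsupp.mp hi)) 2
  · rw [hz, PiLp.sub_apply, not_not.mp (mem_spsupp.not.mp hi), zero_sub, neg_sq]
    exact sq_adjoint_apply_le A _ i
  · exact ofReal_sq_le_of_le_sqrtE hρ (hnoise.trans (min_le_left _ _))

/-- If `o` minimizes `‖Ax − b‖²` over `card(x) ≤ k` (`1 ≤ k ≤ n−1`),
`õ_k > √g_k`, and `‖A‖‖ε‖ ≤ min{√g_{k+1}, õ_k}` for the residual `ε = Ao − b`,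
then `o` is a stationary point of the relaxation `R_g(·) + ‖A·−b‖²`. -/
theorem fixed_cardinality_solution_is_stationary
    {n m : ℕ} (g : ℕ → ℝ≥0∞) (hg0 : g 0 = 0) (hgmono : Monotone g)
    (A : Evec n →L[ℝ] Evec m) (b : Evec m)
    (k : ℕ) (hk1 : 1 ≤ k) (hk2 : k < n)
    (o : Evec n) (hocard : spcard o ≤ k)
    (hmin : ∀ x : Evec n, spcard x ≤ k → ‖A o - b‖ ^ 2 ≤ ‖A x - b‖ ^ 2)
    (hok : sqrtE (g k) < ENNReal.ofReal (sortedAbs o k))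
    (hnoise : ENNReal.ofReal (‖A‖ * ‖A o - b‖) ≤
      min (sqrtE (g (k + 1))) (ENNReal.ofReal (sortedAbs o k))) :
    IsStationaryPt g A b o :=
  fixed_cardinality_solution_is_stationary_general g hgmono A b k o hocard hmin hok hnoise
end
end

section
/- For every y ∈ ℝⁿ, the convex conjugate of f(x) = G(card(x)) + ‖x‖² is given by f*(y) = Σ_{i=1}^n max(ỹ_i²/4 − g_i, 0), where ỹ denotes the sorted magnitudes of y and a summand with g_i = +∞ is interpreted as 0. -/
open scoped RealInnerProductSpace ENNReal
noncomputable section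

/-! For a vector `x` supported on `S`, coordinatewise `x_i y_i - x_i² ≤ y_i²/4`, and the `#S`
largest values of `y_i²` are `ỹ_1², …, ỹ_{#S}²`; so `⟪x, y⟫ - f(x)` is at most
`∑_{i ≤ #S} (ỹ_i²/4 - g_i)`, which is below the sum of positive parts. Conversely, let `A` be the
set of indices `i` with `g_i ≤ ỹ_i²/4`, and take `x = y/2` on the coordinates of ranks in `A`.
As `g` is nondecreasing, `G(#A) ≤ ∑_{i ∈ A} g_i`, so this `x` attains the sum of positive parts. -/

open Finset

theorem Finset.sum_Icc_card_le_sum {M : Type*} [AddCommMonoid M] [PartialOrder M]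
    [IsOrderedAddMonoid M] {f : ℕ → M} (hf : MonotoneOn f (Set.Ici 1)) (s : Finset ℕ)
    (hs : 0 ∉ s) : ∑ i ∈ Icc 1 #s, f i ≤ ∑ i ∈ s, f i := by
  induction s using Finset.induction_on_max with
  | empty => simp
  | insert a s hlt ih =>
    have has : a ∉ s := fun h => lt_irrefl a (hlt a h)
    have ha : a ≠ 0 := fun h => hs (h ▸ mem_insert_self a s)
    have hsub : s ⊆ Icc 1 (a - 1) := fun i hi => by
      have hi0 : i ≠ 0 := fun h => hs (h ▸ mem_insert_of_mem hi)
      have hia := hlt i hi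
      simp only [mem_Icc]; omega
    have hcard : #s + 1 ≤ a := by
      have := card_le_card hsub
      simp only [Nat.card_Icc] at this
      omega
    rw [card_insert_of_notMem has, sum_Icc_succ_top (by omega), sum_insert has, add_comm (f a)]
    exact add_le_add (ih fun h => hs (mem_insert_of_mem h))
      (hf (by simp) (by simp only [Set.mem_Ici]; omega) hcard)

section SortedAbs

variable {n : ℕ} (y : Evec n)

/-- The `1`-based position of coordinate `i` in the sorting used by `sortedAbs y`. -/
def absRank (i : Fin n) : ℕ := ((Tuple.sort (fun i : Fin n => -|y i|)).symm i : ℕ) + 1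

theorem sortedAbs_absRank (i : Fin n) : sortedAbs y (absRank y i) = |y i| := by
  have h : 1 ≤ absRank y i ∧ absRank y i ≤ n := by
    unfold absRank; omega
  simp only [sortedAbs, dif_pos h]
  rw [show (⟨absRank y i - 1, by omega⟩ : Fin n) = (Tuple.sort fun i : Fin n => -|y i|).symm i
    from Fin.ext (by simp [absRank]), Equiv.apply_symm_apply]

theorem absRank_injective : Function.Injective (absRank y) := fun i j h => by
  simpa [absRank, Fin.val_inj] using h

theorem image_absRank_univ : univ.image (absRank y) = Icc 1 n := by
  ext j
  simp only [mem_image, mem_univ, true_and, mem_Icc]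
  constructor
  · rintro ⟨i, rfl⟩
    unfold absRank; omega
  · intro hj
    exact ⟨Tuple.sort (fun i : Fin n => -|y i|) ⟨j - 1, by omega⟩, by simp [absRank]; omega⟩

theorem sortedAbs_nonneg (j : ℕ) : 0 ≤ sortedAbs y j := by
  unfold sortedAbs; split <;> simp

theorem sortedAbs_antitoneOn : AntitoneOn (sortedAbs y) (Set.Ici 1) := by
  intro i hi j _ hij
  by_cases hjn : j ≤ n
  · have hi' : 1 ≤ i ∧ i ≤ n := ⟨hi, hij.trans hjn⟩
    have hj' : 1 ≤ j ∧ j ≤ n := ⟨hi.trans hij, hjn⟩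
    simp only [sortedAbs, dif_pos hi', dif_pos hj']
    simpa using Tuple.monotone_sort (fun i : Fin n => -|y i|)
      (show (⟨i - 1, by omega⟩ : Fin n) ≤ ⟨j - 1, by omega⟩ from Fin.mk_le_mk.2 (by omega))
  · simp only [sortedAbs, dif_neg (show ¬(1 ≤ j ∧ j ≤ n) by omega)]
    exact sortedAbs_nonneg y i

theorem sum_sq_eq_sum_image_absRank (S : Finset (Fin n)) :
    ∑ i ∈ S, y i ^ 2 = ∑ j ∈ S.image (absRank y), sortedAbs y j ^ 2 := by
  rw [sum_image fun i _ j _ h => absRank_injective y h]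
  simp [sortedAbs_absRank]

theorem sum_sq_le_sum_Icc_sortedAbs_sq (S : Finset (Fin n)) :
    ∑ i ∈ S, y i ^ 2 ≤ ∑ j ∈ Icc 1 #S, sortedAbs y j ^ 2 := by
  have hanti : MonotoneOn (fun j => OrderDual.toDual (sortedAbs y j ^ 2)) (Set.Ici 1) :=
    fun i hi j hj hij => pow_le_pow_left₀ (sortedAbs_nonneg y j)
      (sortedAbs_antitoneOn y hi hj hij) 2
  have := Finset.sum_Icc_card_le_sum hanti (S.image (absRank y)) (by simp [absRank])
  rw [card_image_of_injective S (absRank_injective y)] at this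
  rw [sum_sq_eq_sum_image_absRank]
  exact this

end SortedAbs

section HalfOn

variable {ι : Type*} [Fintype ι]

theorem EuclideanSpace.real_inner_eq_sum (x y : EuclideanSpace ℝ ι) :
    ⟪x, y⟫ = ∑ i, x i * y i := by
  simp only [PiLp.inner_apply, RCLike.inner_apply, conj_trivial, mul_comm]

theorem inner_sub_norm_sq_le_sum_support (x y : EuclideanSpace ℝ ι) :
    ⟪x, y⟫ - ‖x‖ ^ 2 ≤ ∑ i ∈ univ.filter (fun i => x i ≠ 0), y i ^ 2 / 4 := by
  rw [EuclideanSpace.real_inner_eq_sum, EuclideanSpace.real_norm_sq_eq, ← sum_sub_distrib,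
    sum_filter]
  refine sum_le_sum fun i _ => ?_
  split_ifs with h
  · nlinarith [sq_nonneg (y i / 2 - x i)]
  · simp [not_not.1 h]

def halfOn [DecidableEq ι] (S : Finset ι) (y : EuclideanSpace ℝ ι) : EuclideanSpace ℝ ι :=
  WithLp.toLp 2 fun i => if i ∈ S then y i / 2 else 0

theorem inner_sub_norm_sq_halfOn [DecidableEq ι] (S : Finset ι) (y : EuclideanSpace ℝ ι) :
    ⟪halfOn S y, y⟫ - ‖halfOn S y‖ ^ 2 = ∑ i ∈ S, y i ^ 2 / 4 := by
  rw [EuclideanSpace.real_inner_eq_sum, EuclideanSpace.real_norm_sq_eq, ← sum_sub_distrib,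
    ← Fintype.sum_ite_mem S]
  refine sum_congr rfl fun i _ => ?_
  simp only [halfOn]
  split_ifs <;> ring

end HalfOn

theorem spcard_halfOn_le {n : ℕ} (S : Finset (Fin n)) (y : Evec n) : spcard (halfOn S y) ≤ #S :=
  card_le_card fun i hi => by
    by_contra h
    simp [halfOn, h] at hi

section Conjugate

variable {n : ℕ} (g : ℕ → ℝ≥0∞) (y : Evec n)

def conjTerm (i : ℕ) : ℝ :=
  if g i = ⊤ then 0 else max (sortedAbs y i ^ 2 / 4 - (g i).toReal) 0

def activeSet : Finset ℕ :=
  (Icc 1 n).filter fun i => g i ≠ ⊤ ∧ (g i).toReal ≤ sortedAbs y i ^ 2 / 4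

theorem sub_toReal_le_conjTerm {i : ℕ} (hi : g i ≠ ⊤) :
    sortedAbs y i ^ 2 / 4 - (g i).toReal ≤ conjTerm g y i := by
  simp [conjTerm, hi]

theorem conjTerm_nonneg (i : ℕ) : 0 ≤ conjTerm g y i := by
  unfold conjTerm; split <;> simp

theorem sum_conjTerm_eq_sum_activeSet :
    ∑ i ∈ Icc 1 n, conjTerm g y i =
      ∑ i ∈ activeSet g y, (sortedAbs y i ^ 2 / 4 - (g i).toReal) := by
  rw [activeSet, sum_filter]
  refine sum_congr rfl fun i _ => ?_
  by_cases hi : g i = ⊤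
  · simp [conjTerm, hi]
  · by_cases hle : (g i).toReal ≤ sortedAbs y i ^ 2 / 4
    · simp [conjTerm, hi, hle]
    · rw [conjTerm, if_neg hi, if_neg (fun h => hle h.2), max_eq_right (by linarith)]

theorem inner_sub_fobj_eq_bot {x : Evec n} (hx : Gsum g (spcard x) = ⊤) :
    ((⟪x, y⟫ : ℝ) : EReal) - fobj g x = ⊥ := by
  rw [fobj, hx, EReal.coe_ennreal_top, EReal.top_add_coe, EReal.sub_top]

theorem inner_sub_fobj_eq_coe {x : Evec n} (hx : Gsum g (spcard x) ≠ ⊤) :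
    ((⟪x, y⟫ : ℝ) : EReal) - fobj g x =
      ((⟪x, y⟫ - ‖x‖ ^ 2 - (Gsum g (spcard x)).toReal : ℝ) : EReal) := by
  rw [fobj, ← EReal.coe_ennreal_toReal hx]
  norm_cast
  ring

theorem inner_sub_fobj_le_sum_conjTerm (x : Evec n) :
    ((⟪x, y⟫ : ℝ) : EReal) - fobj g x ≤ ((∑ i ∈ Icc 1 n, conjTerm g y i : ℝ) : EReal) := by
  by_cases hx : Gsum g (spcard x) = ⊤
  · rw [inner_sub_fobj_eq_bot g y hx]
    exact bot_le
  rw [inner_sub_fobj_eq_coe g y hx, EReal.coe_le_coe_iff]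
  set S := univ.filter fun i => x i ≠ 0
  have hg : ∀ i ∈ Icc 1 #S, g i ≠ ⊤ := fun i hi =>
    ne_top_of_le_ne_top hx (single_le_sum (fun j _ => zero_le) hi)
  calc ⟪x, y⟫ - ‖x‖ ^ 2 - (Gsum g #S).toReal
      ≤ ∑ i ∈ S, y i ^ 2 / 4 - ∑ i ∈ Icc 1 #S, (g i).toReal := by
        rw [Gsum, ENNReal.toReal_sum hg]
        gcongr
        exact inner_sub_norm_sq_le_sum_support x y
    _ ≤ ∑ i ∈ Icc 1 #S, (sortedAbs y i ^ 2 / 4 - (g i).toReal) := by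
        rw [sum_sub_distrib, ← sum_div, ← sum_div]
        gcongr
        exact sum_sq_le_sum_Icc_sortedAbs_sq y S
    _ ≤ ∑ i ∈ Icc 1 #S, conjTerm g y i :=
        sum_le_sum fun i hi => sub_toReal_le_conjTerm g y (hg i hi)
    _ ≤ ∑ i ∈ Icc 1 n, conjTerm g y i :=
        sum_le_sum_of_subset_of_nonneg (Icc_subset_Icc_right (by simpa using card_le_univ S))
          fun i _ _ => conjTerm_nonneg g y i

theorem sum_conjTerm_le_fconj (hg : Monotone g) :
    ((∑ i ∈ Icc 1 n, conjTerm g y i : ℝ) : EReal) ≤ fconj g y := by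
  set A := activeSet g y
  have hA : A ⊆ Icc 1 n := filter_subset _ _
  set S := univ.filter fun i => absRank y i ∈ A
  have hSA : S.image (absRank y) = A := by
    calc S.image (absRank y) = (univ.image (absRank y)).filter (· ∈ A) := by rw [filter_image]
      _ = A := by rw [image_absRank_univ, filter_mem_eq_inter, inter_eq_right.2 hA]
  have hcard : #S = #A := by
    rw [← hSA, card_image_of_injective S (absRank_injective y)]
  have hAfin : ∀ i ∈ A, g i ≠ ⊤ := fun i hi => (mem_filter.1 hi).2.1
  have hGA : Gsum g #A ≤ ∑ i ∈ A, g i :=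
    sum_Icc_card_le_sum (hg.monotoneOn _) A fun h => by simpa using hA h
  have hGx : Gsum g (spcard (halfOn S y)) ≤ ∑ i ∈ A, g i :=
    (sum_le_sum_of_subset (Icc_subset_Icc_right (hcard ▸ spcard_halfOn_le S y))).trans hGA
  have hAfin' : ∑ i ∈ A, g i ≠ ⊤ := ENNReal.sum_ne_top.2 hAfin
  refine le_trans ?_ (le_iSup _ (halfOn S y))
  rw [inner_sub_fobj_eq_coe g y (ne_top_of_le_ne_top hAfin' hGx), EReal.coe_le_coe_iff,
    inner_sub_norm_sq_halfOn, sum_conjTerm_eq_sum_activeSet, sum_sub_distrib, ← sum_div,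
    ← sum_div, sum_sq_eq_sum_image_absRank, hSA, ← ENNReal.toReal_sum hAfin]
  gcongr

end Conjugate

theorem conjugate_formula_general
    {n : ℕ} (g : ℕ → ℝ≥0∞) (hgmono : Monotone g) (y : Evec n) :
    fconj g y = (((∑ i ∈ Finset.Icc 1 n,
      if g i = ⊤ then (0 : ℝ) else max ((sortedAbs y i) ^ 2 / 4 - (g i).toReal) 0) : ℝ) :
        EReal) :=
  le_antisymm (iSup_le (inner_sub_fobj_le_sum_conjTerm g y)) (sum_conjTerm_le_fconj g y hgmono)

/-- The convex conjugate of `f(x) = G(card(x)) + ‖x‖²` is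
`f*(y) = Σ_{i=1}^n max(ỹ_i²/4 − g_i, 0)`, where summands with `g_i = +∞` are `0`. -/
theorem conjugate_formula
    {n : ℕ} (g : ℕ → ℝ≥0∞) (hg0 : g 0 = 0) (hgmono : Monotone g) (y : Evec n) :
    fconj g y = (((∑ i ∈ Finset.Icc 1 n,
      if g i = ⊤ then (0 : ℝ) else max ((sortedAbs y i) ^ 2 / 4 - (g i).toReal) 0) : ℝ) :
        EReal) :=
  conjugate_formula_general g hgmono y
end
end

section
/- Let d ≤ 1 be a real number. Let x, z, x', z' ∈ ℝⁿ and suppose there exist a sign vector s ∈ {−1,1}ⁿ and a permutation matrix π with x = D_s π x̃ and z = D_s π z̃, and a sign vector s' and permutation matrix π' with x' = D_{s'} π' x̃' and z' = D_{s'} π' z̃', where x̃, z̃, x̃', z̃' are the respective sorted magnitude vectors (nonnegative and nonincreasing) and z̃_i ≥ x̃_i, z̃'_i ≥ x̃'_i for all i. If ⟨ρ z̃' − z̃, ρ x̃' − x̃⟩ > d·‖ρ x̃' − x̃‖² for every n×n permutation matrix ρ, then ⟨z' − z, x' − x⟩ > d·‖x' − x‖². -/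
open scoped RealInnerProductSpace ENNReal
noncomputable section

/-!
Coordinatewise, with `a = x̃_{σ i}`, `b = z̃_{σ i}` and `a', b'` likewise for `σ'`, the summand
`(z'_i - z_i)(x'_i - x_i) - d (x'_i - x_i)²` equals `(b' - b)(a' - a) - d (a' - a)²` when the signs
`s_i, s'_i` agree and exceeds it by `2(a b' + a' b) - 4 d a a' ≥ 4(1 - d) a a' ≥ 0` when they differ.
Summing over `i` and reindexing by `ρ = σ⁻¹ σ'` bounds the left side below by the hypothesis for `ρ`.
-/

lemma sortedAbs_nonneg_s13 {n : ℕ} (x : Evec n) (j : ℕ) : 0 ≤ sortedAbs x j := by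
  unfold sortedAbs
  split <;> positivity

lemma Equiv.Perm.sum_comp_pair {ι M : Type*} [Fintype ι] [AddCommMonoid M]
    (σ σ' : Equiv.Perm ι) (F : ι → ι → M) :
    ∑ i, F (σ' i) (σ i) = ∑ i, F ((σ.symm.trans σ') i) i := by
  rw [← Equiv.sum_comp σ.symm]
  simp only [Equiv.apply_symm_apply, Equiv.trans_apply]

lemma inner_sub_mul_norm_sq_eq_sum {ι : Type*} [Fintype ι] (d : ℝ) (u v : EuclideanSpace ℝ ι) :
    ⟪u, v⟫ - d * ‖v‖ ^ 2 = ∑ i, (u i * v i - d * v i ^ 2) := by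
  rw [← real_inner_self_eq_norm_sq, PiLp.inner_apply, PiLp.inner_apply, Finset.mul_sum,
    ← Finset.sum_sub_distrib]
  simp only [RCLike.inner_apply, conj_trivial, sq, mul_comm]

lemma sub_mul_sub_le_signed (d : ℝ) (hd : d ≤ 1) {a b a' b' t t' : ℝ} (ha : 0 ≤ a) (ha' : 0 ≤ a')
    (hab : a ≤ b) (hab' : a' ≤ b') (ht : t = 1 ∨ t = -1) (ht' : t' = 1 ∨ t' = -1) :
    (b' - b) * (a' - a) - d * (a' - a) ^ 2 ≤
      (t' * b' - t * b) * (t' * a' - t * a) - d * (t' * a' - t * a) ^ 2 := by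
  rcases ht with rfl | rfl <;> rcases ht' with rfl | rfl <;>
    nlinarith [mul_nonneg ha' (sub_nonneg.2 hab), mul_nonneg ha (sub_nonneg.2 hab'),
      mul_nonneg (mul_nonneg (sub_nonneg.2 hd) ha) ha']

/-- If `x = D_s π x̃`, `z = D_s π z̃` (same signs and permutation),
`x' = D_{s'} π' x̃'`, `z' = D_{s'} π' z̃'`, with `z̃ ≥ x̃` and `z̃' ≥ x̃'` entrywise, and
`⟨ρz̃' − z̃, ρx̃' − x̃⟩ > d‖ρx̃' − x̃‖²` for every permutation `ρ`, then
`⟨z' − z, x' − x⟩ > d‖x' − x‖²`. -/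
theorem sorted_growth_transfer
    {n : ℕ} (d : ℝ) (hd : d ≤ 1)
    (x z x' z' : Evec n)
    (s : Fin n → ℝ) (σ : Equiv.Perm (Fin n))
    (hs : ∀ i, s i = 1 ∨ s i = -1)
    (hxs : ∀ i, x i = s i * sortedAbs x ((σ i : ℕ) + 1))
    (hzs : ∀ i, z i = s i * sortedAbs z ((σ i : ℕ) + 1))
    (s' : Fin n → ℝ) (σ' : Equiv.Perm (Fin n))
    (hs' : ∀ i, s' i = 1 ∨ s' i = -1)
    (hxs' : ∀ i, x' i = s' i * sortedAbs x' ((σ' i : ℕ) + 1))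
    (hzs' : ∀ i, z' i = s' i * sortedAbs z' ((σ' i : ℕ) + 1))
    (hzx : ∀ i : ℕ, sortedAbs x i ≤ sortedAbs z i)
    (hzx' : ∀ i : ℕ, sortedAbs x' i ≤ sortedAbs z' i)
    (hmain : ∀ ρ : Equiv.Perm (Fin n),
      d * ∑ i : Fin n, (sortedAbs x' ((ρ i : ℕ) + 1) - sortedAbs x ((i : ℕ) + 1)) ^ 2
        < ∑ i : Fin n, (sortedAbs z' ((ρ i : ℕ) + 1) - sortedAbs z ((i : ℕ) + 1)) *
            (sortedAbs x' ((ρ i : ℕ) + 1) - sortedAbs x ((i : ℕ) + 1))) :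
    d * ‖x' - x‖ ^ 2 < ⟪z' - z, x' - x⟫ := by
  set F : Fin n → Fin n → ℝ := fun j k =>
    (sortedAbs z' ((j : ℕ) + 1) - sortedAbs z ((k : ℕ) + 1)) *
        (sortedAbs x' ((j : ℕ) + 1) - sortedAbs x ((k : ℕ) + 1)) -
      d * (sortedAbs x' ((j : ℕ) + 1) - sortedAbs x ((k : ℕ) + 1)) ^ 2 with hF
  have hsorted : 0 < ∑ i, F ((σ.symm.trans σ') i) i := by
    simpa only [hF, Finset.sum_sub_distrib, ← Finset.mul_sum, sub_pos]
      using hmain (σ.symm.trans σ')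
  have hterm : ∀ i, F (σ' i) (σ i) ≤ (z' i - z i) * (x' i - x i) - d * (x' i - x i) ^ 2 := by
    intro i
    rw [hxs i, hzs i, hxs' i, hzs' i]
    exact sub_mul_sub_le_signed d hd (sortedAbs_nonneg_s13 _ _) (sortedAbs_nonneg_s13 _ _)
      (hzx _) (hzx' _) (hs i) (hs' i)
  rw [← sub_pos]
  calc 0 < ∑ i, F ((σ.symm.trans σ') i) i := hsorted
    _ = ∑ i, F (σ' i) (σ i) := (Equiv.Perm.sum_comp_pair σ σ' F).symm
    _ ≤ ∑ i, ((z' i - z i) * (x' i - x i) - d * (x' i - x i) ^ 2) :=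
      Finset.sum_le_sum fun i _ => hterm i
    _ = ⟪z' - z, x' - x⟫ - d * ‖x' - x‖ ^ 2 := by
      simp only [inner_sub_mul_norm_sq_eq_sum, PiLp.sub_apply]
end
end

section
/- Suppose b = Ay + ε where card(y) ≤ k and 2k ≤ n, and A satisfies the RIP of order 2k with constant δ_{2k} ∈ (0,1). If x minimizes ‖Aw − b‖² over all w ∈ ℝⁿ with card(w) ≤ k, then ‖x − y‖ ≤ 2‖ε‖ / √(1−δ_{2k}). -/
/-! Since `x` fits `b` at least as well as `y` does, `‖A(x − y)‖ ≤ ‖Ax − b‖ + ‖Ay − b‖ ≤ 2‖Ay − b‖ = 2‖ε‖`.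
Both vectors are `k`-sparse, so `x − y` is `2k`-sparse and the lower RIP bound
`√(1 − δ) ‖x − y‖ ≤ ‖A(x − y)‖` converts this into the claim. -/

open scoped RealInnerProductSpace ENNReal
noncomputable section

/-- `x` is a stationary point of the relaxation `R_g(·) + ‖A·−b‖²`:
`2z` is a subgradient of `f**` at `x`, where `z = (I − AᵀA)x + Aᵀb`. -/
def IsStationaryRelax {n m : ℕ} (g : ℕ → ℝ≥0∞) (A : Evec n →L[ℝ] Evec m) (b : Evec m)
    (x : Evec n) : Prop :=
  IsSubgrad g ((2 : ℝ) • zvec A b x) x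

theorem spcard_sub_le {n : ℕ} (x y : Evec n) : spcard (x - y) ≤ spcard x + spcard y := by
  unfold spcard
  calc (Finset.univ.filter fun i => (x - y) i ≠ 0).card
      ≤ ((Finset.univ.filter fun i => x i ≠ 0) ∪ Finset.univ.filter fun i => y i ≠ 0).card := by
        refine Finset.card_le_card fun i => ?_
        simp only [Finset.mem_union, Finset.mem_filter, Finset.mem_univ, true_and]
        contrapose!
        rintro ⟨hx, hy⟩
        simp [hx, hy]
    _ ≤ _ := Finset.card_union_le _ _

theorem norm_sub_le_two_mul_of_norm_sub_le {E : Type*} [SeminormedAddCommGroup E] {u v b : E}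
    (h : ‖u - b‖ ≤ ‖v - b‖) : ‖u - v‖ ≤ 2 * ‖v - b‖ :=
  calc ‖u - v‖ ≤ ‖u - b‖ + ‖b - v‖ := norm_sub_le_norm_sub_add_norm_sub u b v
    _ = ‖u - b‖ + ‖v - b‖ := by rw [norm_sub_rev b v]
    _ ≤ 2 * ‖v - b‖ := by linarith

theorem RIP.norm_le_div_sqrt {n m : ℕ} {A : Evec n →L[ℝ] Evec m} {r : ℕ} {δ : ℝ}
    (hA : RIP A r δ) (hδ : δ < 1) {w : Evec n} (hw : spcard w ≤ r) :
    ‖w‖ ≤ ‖A w‖ / Real.sqrt (1 - δ) := by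
  have hpos : 0 < 1 - δ := sub_pos.mpr hδ
  rw [le_div_iff₀ (Real.sqrt_pos.mpr hpos), ← Real.sqrt_sq (norm_nonneg w), ← Real.sqrt_mul',
    ← Real.sqrt_sq (norm_nonneg (A w)), mul_comm]
  · exact Real.sqrt_le_sqrt (hA w hw).1
  · exact hpos.le

theorem sparse_least_squares_error_bound_general
    {n m : ℕ} (A : Evec n →L[ℝ] Evec m) (y : Evec n) (ε b : Evec m)
    (k : ℕ) (hb : b = A y + ε) (hcard : spcard y ≤ k)
    (δ : ℝ) (hδ1 : δ < 1) (hRIP : RIP A (2 * k) δ)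
    (x : Evec n) (hxc : spcard x ≤ k)
    (hmin : ∀ w : Evec n, spcard w ≤ k → ‖A x - b‖ ^ 2 ≤ ‖A w - b‖ ^ 2) :
    ‖x - y‖ ≤ 2 * ‖ε‖ / Real.sqrt (1 - δ) := by
  have hres : A y - b = -ε := by rw [hb]; abel
  have hfit : ‖A x - b‖ ≤ ‖A y - b‖ :=
    (pow_le_pow_iff_left₀ (norm_nonneg _) (norm_nonneg _) two_ne_zero).mp (hmin y hcard)
  have hAxy : ‖A (x - y)‖ ≤ 2 * ‖ε‖ := by
    simpa [map_sub, hres] using norm_sub_le_two_mul_of_norm_sub_le hfit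
  have hsupp : spcard (x - y) ≤ 2 * k := by have := spcard_sub_le x y; omega
  calc ‖x - y‖ ≤ ‖A (x - y)‖ / Real.sqrt (1 - δ) := hRIP.norm_le_div_sqrt hδ1 hsupp
    _ ≤ 2 * ‖ε‖ / Real.sqrt (1 - δ) := by gcongr

/-- If `b = Ay + ε` with `card(y) ≤ k`, `2k ≤ n`, and RIP of order
`2k` holds with constant `δ ∈ (0,1)`, then any minimizer `x` of `‖Aw − b‖²` over
`card(w) ≤ k` satisfies `‖x − y‖ ≤ 2‖ε‖/√(1−δ)`. -/
theorem sparse_least_squares_error_bound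
    {n m : ℕ} (A : Evec n →L[ℝ] Evec m) (y : Evec n) (ε b : Evec m)
    (k : ℕ) (hb : b = A y + ε) (hcard : spcard y ≤ k) (hk : 2 * k ≤ n)
    (δ : ℝ) (hδ0 : 0 < δ) (hδ1 : δ < 1) (hRIP : RIP A (2 * k) δ)
    (x : Evec n) (hxc : spcard x ≤ k)
    (hmin : ∀ w : Evec n, spcard w ≤ k → ‖A x - b‖ ^ 2 ≤ ‖A w - b‖ ^ 2) :
    ‖x - y‖ ≤ 2 * ‖ε‖ / Real.sqrt (1 - δ) :=
  sparse_least_squares_error_bound_general A y ε b k hb hcard δ hδ1 hRIP x hxc hmin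
end
end

section
/- Suppose b = Ay + ε where card(y) ≤ k and 2k ≤ n, A satisfies the RIP of order 2k with constant δ_{2k} ∈ (0,1), and the operator norm satisfies ‖A‖ ≤ 1. If x minimizes ‖Aw − b‖² over all w ∈ ℝⁿ with card(w) ≤ k, and z = (I − AᵀA)x + Aᵀb, then ‖z − x‖ ≤ 3‖ε‖ / √(1−δ_{2k}); in particular, since x̃_{k+1} = 0, the (k+1)-st sorted magnitude of z satisfies z̃_{k+1} ≤ 3‖ε‖ / √(1−δ_{2k}). -/
open scoped RealInnerProductSpace ENNReal
noncomputable section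

/-!
Since `z - x = Aᵀ(b - Ax)` and `‖Aᵀ‖ = ‖A‖ ≤ 1`, `‖z - x‖` is at most the residual
`‖Ax - b‖`, which by minimality of `x` is at most the residual `‖Ay - b‖ = ‖ε‖` of the
feasible point `y`. As `x` has at most `k` nonzero entries, one of the `k + 1` largest
entries of `z` in absolute value sits where `x` vanishes, so `z̃_{k+1} ≤ ‖z - x‖`.
-/

lemma exists_le_apply_sort_eq_zero {n k : ℕ} (x : Evec n) (σ : Equiv.Perm (Fin n))
    (hk : k < n) (hx : spcard x ≤ k) : ∃ j ≤ (⟨k, hk⟩ : Fin n), x (σ j) = 0 := by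
  have hlt : (Finset.univ.filter fun i => x i ≠ 0).card <
      ((Finset.Iic ⟨k, hk⟩).map σ.toEmbedding).card := by
    rw [Finset.card_map, Fin.card_Iic]
    exact Nat.lt_succ_of_le hx
  obtain ⟨_, hmem, hzero⟩ := Finset.exists_mem_notMem_of_card_lt_card hlt
  obtain ⟨j, hj, rfl⟩ := Finset.mem_map.mp hmem
  exact ⟨j, Finset.mem_Iic.mp hj, by simpa using hzero⟩

lemma sortedAbs_succ_le_norm_sub {n k : ℕ} (z x : Evec n) (hx : spcard x ≤ k) :
    sortedAbs z (k + 1) ≤ ‖z - x‖ := by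
  by_cases hk : k < n
  · set σ := Tuple.sort fun i : Fin n => -|z i|
    obtain ⟨j, hj, hxj⟩ := exists_le_apply_sort_eq_zero x σ hk hx
    calc sortedAbs z (k + 1) = |z (σ ⟨k, hk⟩)| := by
          rw [sortedAbs, dif_pos ⟨by omega, hk⟩]; rfl
      _ ≤ |z (σ j)| := by simpa using Tuple.monotone_sort (fun i : Fin n => -|z i|) hj
      _ = ‖(z - x) (σ j)‖ := by simp [hxj]
      _ ≤ ‖z - x‖ := PiLp.norm_apply_le _ _
  · rw [sortedAbs, dif_neg (by omega)]
    exact norm_nonneg _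

lemma zvec_sub_self {n m : ℕ} (A : Evec n →L[ℝ] Evec m) (b : Evec m) (x : Evec n) :
    zvec A b x - x = ContinuousLinearMap.adjoint A (b - A x) := by
  simp only [zvec, map_sub]
  abel

lemma norm_zvec_sub_self_le {n m : ℕ} (A : Evec n →L[ℝ] Evec m) (b : Evec m) (x : Evec n) :
    ‖zvec A b x - x‖ ≤ ‖A‖ * ‖A x - b‖ := by
  rw [zvec_sub_self, norm_sub_rev (A x),
    ← LinearIsometryEquiv.norm_map ContinuousLinearMap.adjoint A]
  exact (ContinuousLinearMap.adjoint A).le_opNorm _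

lemma le_three_mul_div_sqrt_one_sub {a δ : ℝ} (ha : 0 ≤ a) (hδ0 : 0 ≤ δ) (hδ1 : δ < 1) :
    a ≤ 3 * a / Real.sqrt (1 - δ) := by
  have hpos : 0 < Real.sqrt (1 - δ) := Real.sqrt_pos.mpr (by linarith)
  have hle : Real.sqrt (1 - δ) ≤ 1 := Real.sqrt_le_one.mpr (by linarith)
  rw [le_div_iff₀ hpos]
  nlinarith

theorem z_vector_error_bound_general
    {n m : ℕ} (A : Evec n →L[ℝ] Evec m) (y : Evec n) (ε b : Evec m)
    (k : ℕ) (hb : b = A y + ε) (hcard : spcard y ≤ k)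
    (δ : ℝ) (hδ0 : 0 < δ) (hδ1 : δ < 1)
    (hA : ‖A‖ ≤ 1)
    (x : Evec n) (hxc : spcard x ≤ k)
    (hmin : ∀ w : Evec n, spcard w ≤ k → ‖A x - b‖ ^ 2 ≤ ‖A w - b‖ ^ 2) :
    ‖zvec A b x - x‖ ≤ 3 * ‖ε‖ / Real.sqrt (1 - δ) ∧
    sortedAbs (zvec A b x) (k + 1) ≤ 3 * ‖ε‖ / Real.sqrt (1 - δ) := by
  have hy : ‖A y - b‖ = ‖ε‖ := by rw [hb, sub_add_cancel_left, norm_neg]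
  have hres : ‖A x - b‖ ≤ ‖ε‖ :=
    (pow_le_pow_iff_left₀ (norm_nonneg _) (norm_nonneg _) two_ne_zero).mp (hy ▸ hmin y hcard)
  have hdist : ‖zvec A b x - x‖ ≤ 3 * ‖ε‖ / Real.sqrt (1 - δ) :=
    calc ‖zvec A b x - x‖ ≤ ‖A‖ * ‖A x - b‖ := norm_zvec_sub_self_le A b x
      _ ≤ 1 * ‖ε‖ := mul_le_mul hA hres (norm_nonneg _) zero_le_one
      _ ≤ 3 * ‖ε‖ / Real.sqrt (1 - δ) := by
        rw [one_mul]; exact le_three_mul_div_sqrt_one_sub (norm_nonneg _) hδ0.le hδ1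
  exact ⟨hdist, (sortedAbs_succ_le_norm_sub _ x hxc).trans hdist⟩

/-- If `b = Ay + ε` with `card(y) ≤ k`, `2k ≤ n`, RIP of order `2k`
holds with constant `δ ∈ (0,1)`, and `‖A‖ ≤ 1`, then any minimizer `x` of `‖Aw − b‖²`
over `card(w) ≤ k` with `z = (I − AᵀA)x + Aᵀb` satisfies `‖z − x‖ ≤ 3‖ε‖/√(1−δ)`; in
particular `z̃_{k+1} ≤ 3‖ε‖/√(1−δ)`. -/
theorem z_vector_error_bound
    {n m : ℕ} (A : Evec n →L[ℝ] Evec m) (y : Evec n) (ε b : Evec m)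
    (k : ℕ) (hb : b = A y + ε) (hcard : spcard y ≤ k) (hk : 2 * k ≤ n)
    (δ : ℝ) (hδ0 : 0 < δ) (hδ1 : δ < 1) (hRIP : RIP A (2 * k) δ)
    (hA : ‖A‖ ≤ 1)
    (x : Evec n) (hxc : spcard x ≤ k)
    (hmin : ∀ w : Evec n, spcard w ≤ k → ‖A x - b‖ ^ 2 ≤ ‖A w - b‖ ^ 2) :
    ‖zvec A b x - x‖ ≤ 3 * ‖ε‖ / Real.sqrt (1 - δ) ∧
    sortedAbs (zvec A b x) (k + 1) ≤ 3 * ‖ε‖ / Real.sqrt (1 - δ) :=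
  z_vector_error_bound_general A y ε b k hb hcard δ hδ0 hδ1 hA x hxc hmin
end
end

section
/- Let μ > 0 and R_μ(x) = Σ_{i=1}^n (μ − max(√μ − |x_i|, 0)²), the quadratic envelope of μ·card(·). Let A be a real m×n matrix and b ∈ ℝᵐ. If x₀ ∈ ℝⁿ satisfies the normal equations Aᵀ(Ax₀ − b) = 0 (i.e. x₀ is a least-squares solution of Ax = b) and |x₀ᵢ| > √μ for every i ∈ {1,…,n}, then x₀ is a local minimizer of the function x ↦ R_μ(x) + ‖Ax − b‖². -/
open scoped RealInnerProductSpace ENNReal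
noncomputable section

theorem norm_sub_sq_le_of_adjoint_apply_sub_eq_zero
    {E F : Type*} [NormedAddCommGroup E] [InnerProductSpace ℝ E] [CompleteSpace E]
    [NormedAddCommGroup F] [InnerProductSpace ℝ F] [CompleteSpace F]
    {A : E →L[ℝ] F} {b : F} {x₀ : E} (hls : ContinuousLinearMap.adjoint A (A x₀ - b) = 0)
    (x : E) : ‖A x₀ - b‖ ^ 2 ≤ ‖A x - b‖ ^ 2 := by
  -- The residual at `x₀` is orthogonal to the range of `A`, so Pythagoras applies.
  have horth : ⟪A (x - x₀), A x₀ - b⟫ = 0 := by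
    rw [← ContinuousLinearMap.adjoint_inner_right, hls, inner_zero_right]
  calc ‖A x₀ - b‖ ^ 2 ≤ ‖A (x - x₀)‖ ^ 2 + ‖A x₀ - b‖ ^ 2 := by
        linarith [sq_nonneg ‖A (x - x₀)‖]
    _ = ‖A (x - x₀) + (A x₀ - b)‖ ^ 2 := by rw [norm_add_sq_real, horth]; ring
    _ = ‖A x - b‖ ^ 2 := by rw [map_sub, sub_add_sub_cancel]

theorem EuclideanSpace.eventually_forall_lt_abs_apply {ι : Type*} [Finite ι] {c : ℝ}
    {x₀ : EuclideanSpace ℝ ι} (h : ∀ i, c < |x₀ i|) :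
    ∀ᶠ x in nhds x₀, ∀ i, c < |x i| :=
  Filter.eventually_all.2 fun i =>
    ((EuclideanSpace.proj i).continuous.abs.continuousAt).eventually_const_lt (h i)

theorem sub_max_sqrt_sub_abs_sq_of_sqrt_le_abs {μ t : ℝ} (h : Real.sqrt μ ≤ |t|) :
    μ - max (Real.sqrt μ - |t|) 0 ^ 2 = μ := by
  rw [max_eq_right (sub_nonpos.2 h)]
  ring

theorem separable_regularizer_dense_local_minimum_general
    {n m : ℕ} (μ : ℝ)
    (A : Evec n →L[ℝ] Evec m) (b : Evec m) (x₀ : Evec n)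
    (hls : ContinuousLinearMap.adjoint A (A x₀ - b) = 0)
    (hbig : ∀ i : Fin n, Real.sqrt μ < |x₀ i|) :
    IsLocalMin
      (fun x : Evec n =>
        (∑ i : Fin n, (μ - max (Real.sqrt μ - |x i|) 0 ^ 2)) + ‖A x - b‖ ^ 2) x₀ := by
  -- Near `x₀` every entry stays above `√μ`, where each summand of `R_μ` is the constant `μ`.
  have hreg : IsLocalMin (fun x : Evec n => ∑ i : Fin n, (μ - max (Real.sqrt μ - |x i|) 0 ^ 2))
      x₀ := by
    filter_upwards [EuclideanSpace.eventually_forall_lt_abs_apply hbig] with x hx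
    simp only [sub_max_sqrt_sub_abs_sq_of_sqrt_le_abs (hx _).le,
      sub_max_sqrt_sub_abs_sq_of_sqrt_le_abs (hbig _).le, le_refl]
  exact hreg.add (Filter.Eventually.of_forall (norm_sub_sq_le_of_adjoint_apply_sub_eq_zero hls))

/-- For `R_μ(x) = Σ_i (μ − max(√μ − |x_i|, 0)²)` with `μ > 0`, any
least-squares solution `x₀` of `Ax = b` (i.e. `Aᵀ(Ax₀ − b) = 0`) all of whose entries
satisfy `|x₀ᵢ| > √μ` is a local minimizer of `x ↦ R_μ(x) + ‖Ax − b‖²`. -/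
theorem separable_regularizer_dense_local_minimum
    {n m : ℕ} (μ : ℝ) (hμ : 0 < μ)
    (A : Evec n →L[ℝ] Evec m) (b : Evec m) (x₀ : Evec n)
    (hls : ContinuousLinearMap.adjoint A (A x₀ - b) = 0)
    (hbig : ∀ i : Fin n, Real.sqrt μ < |x₀ i|) :
    IsLocalMin
      (fun x : Evec n =>
        (∑ i : Fin n, (μ - max (Real.sqrt μ - |x i|) 0 ^ 2)) + ‖A x - b‖ ^ 2) x₀ :=
  separable_regularizer_dense_local_minimum_general μ A b x₀ hls hbig
end
end
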